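/- Let θ ∈ (0,1), and let g(u) = k·f_θ(q·f_θ(u)) with f_θ(h) = arctanh(θ·tanh h), k,q positive integers with kq·θ² > 1. Then g has a unique fixed point u* > 0 on (0,∞). -/

import Mathlib

/-- The real inverse hyperbolic tangent, `arctanh x = (1/2) ln((1+x)/(1-x))`. -/
noncomputable def arctanh (x : ℝ) : ℝ := (1 / 2) * Real.log ((1 + x) / (1 - x))

/-- The Ising compatibility function `f_θ(h) = arctanh(θ · tanh h)`. -/
noncomputable def fIsing (θ h : ℝ) : ℝ := arctanh (θ * Real.tanh h)

/-!
On `[0, ∞)` the map `g` is strictly concave: `f_θ' = θ (1 - t²) / (1 - θ² t²)` with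
`t = tanh u` is positive and strictly decreasing in `u ≥ 0`, so
`g' = k f_θ'(q f_θ u) · q f_θ'(u)` is a product of positive decreasing factors. Since `g 0 = 0`,
the secant slope `g u / u` is then strictly decreasing on `(0, ∞)`, so it takes the value `1` at
most once. It does take it: near `0` it is close to `g'(0) = kqθ² > 1`, while `g ≤ k arctanh θ`
is bounded, so `g u < u` for large `u`.
-/

open Real Set Filter Topology

theorem StrictConcaveOn.strictAntiOn_div {g : ℝ → ℝ} (hg : StrictConcaveOn ℝ (Ici 0) g)
    (hg0 : g 0 = 0) : StrictAntiOn (fun x => g x / x) (Ioi 0) := by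
  intro x (hx : 0 < x) y (hy : 0 < y) hxy
  simpa [hg0] using hg.secant_strict_mono self_mem_Ici hx.le hy.le hx.ne' hy.ne' hxy

theorem exists_pos_lt_of_one_lt_deriv {g : ℝ → ℝ} (hg0 : g 0 = 0) {d : ℝ}
    (hd : HasDerivWithinAt g d (Ioi 0) 0) (hd1 : 1 < d) : ∃ a, 0 < a ∧ a < g a := by
  have hslope := (hasDerivWithinAt_iff_tendsto_slope' (s := Ioi 0) (lt_irrefl 0)).1 hd
  obtain ⟨a, ha, ha0⟩ :=
    ((hslope.eventually (eventually_gt_nhds hd1)).and self_mem_nhdsWithin).exists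
  rw [slope_def_field, hg0, sub_zero, sub_zero, one_lt_div ha0] at ha
  exact ⟨a, ha0, ha⟩

theorem exists_pos_fixedPoint {g : ℝ → ℝ} (hcont : ContinuousOn g (Ioi 0)) (hg0 : g 0 = 0)
    {d : ℝ} (hd : HasDerivWithinAt g d (Ioi 0) 0) (hd1 : 1 < d) (hbdd : BddAbove (g '' Ioi 0)) :
    ∃ u, 0 < u ∧ g u = u := by
  obtain ⟨a, ha0, hga⟩ := exists_pos_lt_of_one_lt_deriv hg0 hd hd1
  obtain ⟨M, hM⟩ := hbdd
  set b := max M a + 1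
  have hab : a ≤ b := by linarith [le_max_right M a]
  have hgb : g b < b :=
    (hM (mem_image_of_mem g (ha0.trans_le hab))).trans_lt (by linarith [le_max_left M a])
  have hIcc : Icc a b ⊆ Ioi 0 := fun x hx => ha0.trans_le hx.1
  obtain ⟨u, hu, hgu⟩ := intermediate_value_Icc' hab ((hcont.mono hIcc).sub continuousOn_id)
    (show (0 : ℝ) ∈ Icc (g b - b) (g a - a) from ⟨by linarith, by linarith⟩)
  exact ⟨u, hIcc hu, sub_eq_zero.1 hgu⟩

theorem StrictConcaveOn.existsUnique_pos_fixedPoint {g : ℝ → ℝ}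
    (hg : StrictConcaveOn ℝ (Ici 0) g) (hg0 : g 0 = 0) {d : ℝ}
    (hd : HasDerivWithinAt g d (Ioi 0) 0) (hd1 : 1 < d) (hbdd : BddAbove (g '' Ioi 0)) :
    ∃! u, 0 < u ∧ g u = u := by
  have hcont : ContinuousOn g (Ioi 0) := by
    simpa using hg.concaveOn.continuousOn_interior
  obtain ⟨u, hu, hgu⟩ := exists_pos_fixedPoint hcont hg0 hd hd1 hbdd
  refine ⟨u, ⟨hu, hgu⟩, fun v ⟨hv, hgv⟩ => (hg.strictAntiOn_div hg0).injOn hv hu ?_⟩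
  simp only [hgu, hgv, div_self hu.ne', div_self hv.ne']

theorem Real.hasDerivAt_tanh (x : ℝ) : HasDerivAt tanh (1 - tanh x ^ 2) x := by
  have h := (hasDerivAt_sinh x).div (hasDerivAt_cosh x) (cosh_pos x).ne'
  rw [show sinh / cosh = tanh from funext fun y => (tanh_eq_sinh_div_cosh y).symm] at h
  refine h.congr_deriv ?_
  rw [tanh_eq_sinh_div_cosh]
  field_simp

theorem Real.tanh_strictMono : StrictMono tanh :=
  strictMono_of_deriv_pos fun x => by
    rw [(hasDerivAt_tanh x).deriv]
    linarith [tanh_sq_lt_one x]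

theorem hasDerivAt_arctanh {x : ℝ} (hx : x ∈ Ioo (-1) 1) :
    HasDerivAt arctanh (1 / (1 - x ^ 2)) x := by
  have hp : 0 < 1 + x := by linarith [hx.1]
  have hm : 0 < 1 - x := by linarith [hx.2]
  have h := ((((hasDerivAt_id' x).const_add 1).div ((hasDerivAt_id' x).const_sub 1)
    hm.ne').log (div_pos hp hm).ne').const_mul (1 / 2 : ℝ)
  simp only [Pi.div_apply] at h
  refine h.congr_deriv ?_
  have : 1 - x ^ 2 ≠ 0 := by nlinarith
  field_simp
  ring

theorem arctanh_eq_artanh {x : ℝ} (hx : x ∈ Icc (-1) 1) : arctanh x = artanh x :=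
  (artanh_eq_half_log hx).symm

noncomputable def fIsingDeriv (θ u : ℝ) : ℝ :=
  θ * (1 - tanh u ^ 2) / (1 - θ ^ 2 * tanh u ^ 2)

noncomputable def gIsing (θ a b u : ℝ) : ℝ := a * fIsing θ (b * fIsing θ u)

section Ising

variable {θ : ℝ}

theorem mul_tanh_mem_Ioo (hθ : |θ| ≤ 1) (u : ℝ) : θ * tanh u ∈ Ioo (-1) 1 := by
  have : |θ * tanh u| < 1 := by
    rw [abs_mul]
    exact mul_lt_one_of_nonneg_of_lt_one_right hθ (abs_nonneg _) (abs_tanh_lt_one u)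
  exact ⟨(abs_lt.1 this).1, (abs_lt.1 this).2⟩

theorem hasDerivAt_fIsing (hθ : |θ| ≤ 1) (u : ℝ) :
    HasDerivAt (fIsing θ) (fIsingDeriv θ u) u := by
  refine ((hasDerivAt_arctanh (mul_tanh_mem_Ioo hθ u)).comp u
    ((hasDerivAt_tanh u).const_mul θ)).congr_deriv ?_
  rw [fIsingDeriv, mul_pow]
  ring

theorem fIsing_zero (θ : ℝ) : fIsing θ 0 = 0 := by
  simp [fIsing, arctanh]

theorem fIsingDeriv_zero (θ : ℝ) : fIsingDeriv θ 0 = θ := by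
  simp [fIsingDeriv]

theorem fIsingDeriv_pos (hθ : θ ∈ Ioo 0 1) (u : ℝ) : 0 < fIsingDeriv θ u := by
  have ht := tanh_sq_lt_one u
  have hθ2 : θ ^ 2 < 1 := by nlinarith [hθ.1, hθ.2]
  exact div_pos (mul_pos hθ.1 (by linarith)) (by nlinarith [sq_nonneg (tanh u)])

theorem fIsingDeriv_strictAntiOn (hθ : θ ∈ Ioo 0 1) :
    StrictAntiOn (fIsingDeriv θ) (Ici 0) := by
  intro u (hu : 0 ≤ u) v (hv : 0 ≤ v) huv
  have htu : 0 ≤ tanh u := by simpa using tanh_strictMono.monotone hu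
  have hsq : tanh u ^ 2 < tanh v ^ 2 := by
    have := tanh_strictMono huv
    nlinarith
  have hθ2 : θ ^ 2 < 1 := by nlinarith [hθ.1, hθ.2]
  have hv1 := tanh_sq_lt_one v
  rw [fIsingDeriv, fIsingDeriv, div_lt_div_iff₀ (by nlinarith) (by nlinarith)]
  nlinarith [mul_pos hθ.1 (mul_pos (sub_pos.2 hsq) (sub_pos.2 hθ2))]

theorem fIsing_strictMono (hθ : θ ∈ Ioo 0 1) : StrictMono (fIsing θ) :=
  strictMono_of_deriv_pos fun u => by
    rw [(hasDerivAt_fIsing (abs_le.2 ⟨by linarith [hθ.1], hθ.2.le⟩) u).deriv]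
    exact fIsingDeriv_pos hθ u

theorem fIsing_nonneg (hθ : θ ∈ Ioo 0 1) {u : ℝ} (hu : 0 ≤ u) : 0 ≤ fIsing θ u := by
  simpa [fIsing_zero] using (fIsing_strictMono hθ).monotone hu

theorem fIsing_le_arctanh (hθ : θ ∈ Ioo 0 1) (u : ℝ) : fIsing θ u ≤ arctanh θ := by
  have hmem := mul_tanh_mem_Ioo (abs_le.2 ⟨by linarith [hθ.1], hθ.2.le⟩) u
  rw [fIsing, arctanh_eq_artanh (Ioo_subset_Icc_self hmem),
    arctanh_eq_artanh ⟨by linarith [hθ.1], hθ.2.le⟩]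
  exact artanh_le_artanh hmem.1 hθ.2 (mul_le_of_le_one_right hθ.1.le (tanh_lt_one u).le)

theorem gIsing_zero (θ a b : ℝ) : gIsing θ a b 0 = 0 := by
  simp [gIsing, fIsing_zero]

theorem hasDerivAt_gIsing (hθ : |θ| ≤ 1) (a b u : ℝ) :
    HasDerivAt (gIsing θ a b)
      (a * (fIsingDeriv θ (b * fIsing θ u) * (b * fIsingDeriv θ u))) u :=
  ((hasDerivAt_fIsing hθ _).comp u ((hasDerivAt_fIsing hθ u).const_mul b)).const_mul a

theorem hasDerivAt_gIsing_zero (hθ : |θ| ≤ 1) (a b : ℝ) :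
    HasDerivAt (gIsing θ a b) (a * b * θ ^ 2) 0 := by
  convert hasDerivAt_gIsing hθ a b 0 using 1
  simp only [fIsing_zero, mul_zero, fIsingDeriv_zero]
  ring

theorem strictConcaveOn_gIsing (hθ : θ ∈ Ioo 0 1) {a b : ℝ} (ha : 0 < a) (hb : 0 < b) :
    StrictConcaveOn ℝ (Ici 0) (gIsing θ a b) := by
  have hθ' : |θ| ≤ 1 := abs_le.2 ⟨by linarith [hθ.1], hθ.2.le⟩
  refine StrictAntiOn.strictConcaveOn_of_deriv (convex_Ici 0)
    (fun u _ => (hasDerivAt_gIsing hθ' a b u).continuousAt.continuousWithinAt) ?_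
  rw [funext fun u => (hasDerivAt_gIsing hθ' a b u).deriv, interior_Ici]
  intro u (hu : 0 < u) v (hv : 0 < v) huv
  have hinner : fIsingDeriv θ v < fIsingDeriv θ u :=
    fIsingDeriv_strictAntiOn hθ hu.le hv.le huv
  have houter : fIsingDeriv θ (b * fIsing θ v) < fIsingDeriv θ (b * fIsing θ u) :=
    fIsingDeriv_strictAntiOn hθ (mul_nonneg hb.le (fIsing_nonneg hθ hu.le))
      (mul_nonneg hb.le (fIsing_nonneg hθ hv.le))
      (mul_lt_mul_of_pos_left (fIsing_strictMono hθ huv) hb)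
  exact mul_lt_mul_of_pos_left (mul_lt_mul'' houter (mul_lt_mul_of_pos_left hinner hb)
    (fIsingDeriv_pos hθ _).le (mul_pos hb (fIsingDeriv_pos hθ v)).le) ha

theorem gIsing_le_mul_arctanh (hθ : θ ∈ Ioo 0 1) {a : ℝ} (ha : 0 ≤ a) (b u : ℝ) :
    gIsing θ a b u ≤ a * arctanh θ :=
  mul_le_mul_of_nonneg_left (fIsing_le_arctanh hθ _) ha

end Ising

/-- If `kqθ² > 1` then `g(u) = k f_θ(q f_θ(u))` has a unique fixed point on `(0, ∞)`. -/
theorem g_unique_positive_fixed_point (θ : ℝ) (hθ : θ ∈ Set.Ioo (0 : ℝ) 1)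
    (k q : ℕ) (hk : 0 < k) (hq : 0 < q)
    (hcrit : 1 < (k : ℝ) * q * θ ^ 2) :
    ∃! u : ℝ, 0 < u ∧ k * fIsing θ (q * fIsing θ u) = u := by
  have hθ' : |θ| ≤ 1 := abs_le.2 ⟨by linarith [hθ.1], hθ.2.le⟩
  have hbdd : BddAbove (gIsing θ k q '' Ioi 0) := by
    refine ⟨k * arctanh θ, ?_⟩
    rintro _ ⟨u, -, rfl⟩
    exact gIsing_le_mul_arctanh hθ k.cast_nonneg q u
  have hconc := strictConcaveOn_gIsing hθ (Nat.cast_pos.2 hk) (Nat.cast_pos.2 hq)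
  exact hconc.existsUnique_pos_fixedPoint (gIsing_zero θ k q)
    (hasDerivAt_gIsing_zero hθ' k q).hasDerivWithinAt hcrit hbdd
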